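/- In the tree-recognition system, if G is an input graph and G ⇒*_𝓡 H, then H has exactly one root node; in particular H is non-empty, so the empty graph is not derivable from any input graph. -/

import Mathlib

/-! # Rooted graph transformation with relabelling -/

/-- A graph over a label alphabet `(LV, LE)`: finite vertex and edge sets, total
source/target functions, a partial node-labelling function `l`, a total
edge-labelling function `m`, and a partial rootedness function `p`
(`some true` = root node, `some false` = non-root, `none` = undefined). -/
structure RGraph (LV LE : Type) : Type 1 where
  V : Type
  E : Type
  finV : Finite V
  finE : Finite E
  s : E → V
  t : E → V
  l : V → Option LV
  m : E → LE
  p : V → Option Bool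

namespace RGraph

variable {LV LE : Type}

def IsTotallyLabelled (G : RGraph LV LE) : Prop := ∀ v, (G.l v).isSome
def IsTotallyRooted (G : RGraph LV LE) : Prop := ∀ v, (G.p v).isSome
/-- totally labelled, totally rooted graph -/
def IsTLRG (G : RGraph LV LE) : Prop := G.IsTotallyLabelled ∧ G.IsTotallyRooted

/-- The number of root nodes `|p⁻¹({1})|`. -/
noncomputable def rootCount (G : RGraph LV LE) : ℕ := Nat.card {v : G.V // G.p v = some true}

/-- The degree of a node. -/
noncomputable def degree (G : RGraph LV LE) (v : G.V) : ℕ :=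
  Nat.card {e : G.E // G.s e = v} + Nat.card {e : G.E // G.t e = v}

end RGraph

/-- Graph morphisms preserve sources, targets, edge labels, and node labels and
rootedness wherever these are defined. -/
structure Morphism {LV LE : Type} (G H : RGraph LV LE) : Type where
  fV : G.V → H.V
  fE : G.E → H.E
  src : ∀ e, fV (G.s e) = H.s (fE e)
  tgt : ∀ e, fV (G.t e) = H.t (fE e)
  edgeLabel : ∀ e, G.m e = H.m (fE e)
  nodeLabel : ∀ v x, G.l v = some x → H.l (fV v) = some x
  rootedness : ∀ v b, G.p v = some b → H.p (fV v) = some b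

namespace Morphism

variable {LV LE : Type} {G H K : RGraph LV LE}

def Injective (g : Morphism G H) : Prop := Function.Injective g.fV ∧ Function.Injective g.fE

/-- identity morphism -/
def ident (G : RGraph LV LE) : Morphism G G where
  fV := id
  fE := id
  src := fun _ => rfl
  tgt := fun _ => rfl
  edgeLabel := fun _ => rfl
  nodeLabel := fun _ _ h => h
  rootedness := fun _ _ h => h

/-- composition of morphisms -/
def comp (g : Morphism G H) (h : Morphism H K) : Morphism G K where
  fV := h.fV ∘ g.fV
  fE := h.fE ∘ g.fE
  src := fun e => by simp [Function.comp, g.src e, h.src (g.fE e)]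
  tgt := fun e => by simp [Function.comp, g.tgt e, h.tgt (g.fE e)]
  edgeLabel := fun e => by simp [Function.comp, ← h.edgeLabel (g.fE e), g.edgeLabel e]
  nodeLabel := fun v x hx => h.nodeLabel _ _ (g.nodeLabel v x hx)
  rootedness := fun v b hb => h.rootedness _ _ (g.rootedness v b hb)

end Morphism

/-- An isomorphism of graphs: a morphism with a two-sided inverse morphism. -/
structure Iso {LV LE : Type} (G H : RGraph LV LE) : Type where
  toMor : Morphism G H
  invMor : Morphism H G
  leftV : ∀ v, invMor.fV (toMor.fV v) = v
  leftE : ∀ e, invMor.fE (toMor.fE e) = e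
  rightV : ∀ v, toMor.fV (invMor.fV v) = v
  rightE : ∀ e, toMor.fE (invMor.fE e) = e

/-- A rule `⟨L ← K → R⟩`: graphs `L`, `K`, `R` together with inclusion
(injective) morphisms `K ↪ L` and `K ↪ R`.  (In the rooted relabelling setting
`L` and `R` are additionally required to be TLRGs; this requirement is stated
as a hypothesis where needed.) -/
structure Rule (LV LE : Type) : Type 1 where
  L : RGraph LV LE
  K : RGraph LV LE
  R : RGraph LV LE
  incL : Morphism K L
  incR : Morphism K R
  injL : incL.Injective
  injR : incR.Injective

namespace Rule

variable {LV LE : Type} (r : Rule LV LE) (G : RGraph LV LE)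

/-- The inverse rule `r⁻¹ = ⟨R ← K → L⟩`. -/
def inv (r : Rule LV LE) : Rule LV LE where
  L := r.R
  K := r.K
  R := r.L
  incL := r.incR
  incR := r.incL
  injL := r.injR
  injR := r.injL

/-- The dangling condition: no edge of `G ∖ g(L)` is incident to a node of `g(L ∖ K)`. -/
def Dangling (g : Morphism r.L G) : Prop :=
  ∀ e : G.E, (∀ e' : r.L.E, g.fE e' ≠ e) →
    ∀ v : r.L.V, (∀ k : r.K.V, r.incL.fV k ≠ v) →
      G.s e ≠ g.fV v ∧ G.t e ≠ g.fV v

/-- The match `g` is applicable: it is injective and satisfies the dangling condition. -/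
def Applicable (g : Morphism r.L G) : Prop := g.Injective ∧ r.Dangling G g

/-- the nodes `g(L ∖ K)` deleted by applying `r` via `g` -/
def DelV (g : Morphism r.L G) : Set G.V :=
  {x | ∃ v : r.L.V, (∀ k : r.K.V, r.incL.fV k ≠ v) ∧ g.fV v = x}

/-- the edges `g(L ∖ K)` deleted by applying `r` via `g` -/
def DelE (g : Morphism r.L G) : Set G.E :=
  {x | ∃ e : r.L.E, (∀ k : r.K.E, r.incL.fE k ≠ e) ∧ g.fE e = x}

theorem kept_incL {g : Morphism r.L G} (hinj : g.Injective) (k : r.K.V) :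
    g.fV (r.incL.fV k) ∉ r.DelV G g := by
  rintro ⟨v, hv, heq⟩
  exact hv k (hinj.1 heq).symm

theorem kept_src {g : Morphism r.L G} (h : r.Applicable G g) {e : G.E}
    (he : e ∉ r.DelE G g) : G.s e ∉ r.DelV G g := by
  rintro ⟨v, hv, heq⟩
  by_cases hc : ∃ e', g.fE e' = e
  · obtain ⟨e', rfl⟩ := hc
    by_cases hk : ∃ k, r.incL.fE k = e'
    · obtain ⟨k, rfl⟩ := hk
      have h1 : g.fV (r.L.s (r.incL.fE k)) = G.s (g.fE (r.incL.fE k)) := g.src _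
      have h2 : r.incL.fV (r.K.s k) = r.L.s (r.incL.fE k) := r.incL.src k
      have h3 : g.fV v = g.fV (r.incL.fV (r.K.s k)) := by rw [heq, h2, h1]
      exact hv _ (h.1.1 h3).symm
    · exact he ⟨e', fun k hk' => hk ⟨k, hk'⟩, rfl⟩
  · exact (h.2 e (fun e' he' => hc ⟨e', he'⟩) v hv).1 heq.symm

theorem kept_tgt {g : Morphism r.L G} (h : r.Applicable G g) {e : G.E}
    (he : e ∉ r.DelE G g) : G.t e ∉ r.DelV G g := by
  rintro ⟨v, hv, heq⟩
  by_cases hc : ∃ e', g.fE e' = e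
  · obtain ⟨e', rfl⟩ := hc
    by_cases hk : ∃ k, r.incL.fE k = e'
    · obtain ⟨k, rfl⟩ := hk
      have h1 : g.fV (r.L.t (r.incL.fE k)) = G.t (g.fE (r.incL.fE k)) := g.tgt _
      have h2 : r.incL.fV (r.K.t k) = r.L.t (r.incL.fE k) := r.incL.tgt k
      have h3 : g.fV v = g.fV (r.incL.fV (r.K.t k)) := by rw [heq, h2, h1]
      exact hv _ (h.1.1 h3).symm
    · exact he ⟨e', fun k hk' => hk ⟨k, hk'⟩, rfl⟩
  · exact (h.2 e (fun e' he' => hc ⟨e', he'⟩) v hv).2 heq.symm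

attribute [local instance] Classical.propDecidable

/-- The result graph of applying `r` to `G` via an applicable match `g`:
delete `g(L ∖ K)` (undefining labels/rootedness of images of interface nodes
where they are undefined in `K`), then add `R ∖ K` disjointly, relabelling
(and re-rooting) the images of interface nodes according to `R`. -/
noncomputable def result (g : Morphism r.L G) (h : r.Applicable G g) : RGraph LV LE where
  V := {x : G.V // x ∉ r.DelV G g} ⊕ {v : r.R.V // ∀ k, r.incR.fV k ≠ v}
  E := {x : G.E // x ∉ r.DelE G g} ⊕ {e : r.R.E // ∀ k, r.incR.fE k ≠ e}
  finV := by
    haveI := G.finV; haveI := r.R.finV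
    infer_instance
  finE := by
    haveI := G.finE; haveI := r.R.finE
    infer_instance
  s := fun e =>
    match e with
    | Sum.inl x => Sum.inl ⟨G.s x.1, r.kept_src G h x.2⟩
    | Sum.inr x =>
        if hk : ∃ k, r.incR.fV k = r.R.s x.1 then
          Sum.inl ⟨g.fV (r.incL.fV hk.choose), r.kept_incL G h.1 _⟩
        else Sum.inr ⟨r.R.s x.1, fun k hk' => hk ⟨k, hk'⟩⟩
  t := fun e =>
    match e with
    | Sum.inl x => Sum.inl ⟨G.t x.1, r.kept_tgt G h x.2⟩
    | Sum.inr x =>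
        if hk : ∃ k, r.incR.fV k = r.R.t x.1 then
          Sum.inl ⟨g.fV (r.incL.fV hk.choose), r.kept_incL G h.1 _⟩
        else Sum.inr ⟨r.R.t x.1, fun k hk' => hk ⟨k, hk'⟩⟩
  l := fun v =>
    match v with
    | Sum.inl x =>
        if hk : ∃ k : r.K.V, r.K.l k = none ∧ g.fV (r.incL.fV k) = x.1 then
          r.R.l (r.incR.fV hk.choose)
        else G.l x.1
    | Sum.inr v => r.R.l v.1
  m := fun e =>
    match e with
    | Sum.inl x => G.m x.1
    | Sum.inr x => r.R.m x.1
  p := fun v =>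
    match v with
    | Sum.inl x =>
        if hk : ∃ k : r.K.V, r.K.p k = none ∧ g.fV (r.incL.fV k) = x.1 then
          r.R.p (r.incR.fV hk.choose)
        else G.p x.1
    | Sum.inr v => r.R.p v.1

/-- Direct derivation `G ⇒_r M`: there is an applicable match `g` such that `M`
is isomorphic to the result of applying `r` to `G` via `g`. -/
def Deriv (r : Rule LV LE) (G M : RGraph LV LE) : Prop :=
  ∃ (g : Morphism r.L G) (h : r.Applicable G g), Nonempty (Iso (r.result G g h) M)

end Rule

/-- `G ⇒_𝓡 H` for a set of rules. -/
def GTStep {LV LE : Type} (Rs : Set (Rule LV LE)) (G H : RGraph LV LE) : Prop :=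
  ∃ r ∈ Rs, r.Deriv G H

/-- `G ⇒*_𝓡 H`: the reflexive-transitive closure of `⇒_𝓡`, up to isomorphism. -/
def GTDerivStar {LV LE : Type} (Rs : Set (Rule LV LE)) (G H : RGraph LV LE) : Prop :=
  Relation.ReflTransGen (GTStep Rs) G H ∨ Nonempty (Iso G H)
/-! ## The tree-recognition system -/

/-- node labels: `□` (square) and `△` (triangle) -/
inductive NodeLab : Type where
  | square : NodeLab
  | tri : NodeLab
deriving DecidableEq

/-- `L` of rule `r0`: `v1 --□--> v2`, both `□`-labelled, `v1` unrooted, `v2` rooted. -/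
abbrev L0 : RGraph NodeLab Unit where
  V := Fin 2
  E := Unit
  finV := inferInstance
  finE := inferInstance
  s := fun _ => 0
  t := fun _ => 1
  l := fun _ => some .square
  m := fun _ => ()
  p := ![some false, some true]

/-- `K` of rules `r0` and `r1`: the single node `v1`, unlabelled, rootedness undefined. -/
abbrev K0 : RGraph NodeLab Unit where
  V := Unit
  E := PEmpty
  finV := inferInstance
  finE := inferInstance
  s := PEmpty.elim
  t := PEmpty.elim
  l := fun _ => none
  m := PEmpty.elim
  p := fun _ => none

/-- `R` of rules `r0` and `r1`: the single node `v1`, labelled `□`, rooted. -/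
abbrev R0 : RGraph NodeLab Unit where
  V := Unit
  E := PEmpty
  finV := inferInstance
  finE := inferInstance
  s := PEmpty.elim
  t := PEmpty.elim
  l := fun _ => some .square
  m := PEmpty.elim
  p := fun _ => some true

def incL0 : Morphism K0 L0 where
  fV := fun _ => 0
  fE := PEmpty.elim
  src := fun e => e.elim
  tgt := fun e => e.elim
  edgeLabel := fun e => e.elim
  nodeLabel := fun _ _ h => nomatch h
  rootedness := fun _ _ h => nomatch h

def incR0 : Morphism K0 R0 where
  fV := id
  fE := PEmpty.elim
  src := fun e => e.elim
  tgt := fun e => e.elim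
  edgeLabel := fun e => e.elim
  nodeLabel := fun _ _ h => nomatch h
  rootedness := fun _ _ h => nomatch h

/-- rule `r0`: prune a rooted `□`-leaf with unrooted `□`-parent, root moves to the parent -/
def r0 : Rule NodeLab Unit where
  L := L0
  K := K0
  R := R0
  incL := incL0
  incR := incR0
  injL := ⟨Function.injective_of_subsingleton _, Function.injective_of_subsingleton _⟩
  injR := ⟨Function.injective_of_subsingleton _, Function.injective_of_subsingleton _⟩

/-- `L` of rule `r1`: like `L0` but `v1` is labelled `△`. -/
abbrev L1 : RGraph NodeLab Unit where
  V := Fin 2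
  E := Unit
  finV := inferInstance
  finE := inferInstance
  s := fun _ => 0
  t := fun _ => 1
  l := ![some .tri, some .square]
  m := fun _ => ()
  p := ![some false, some true]

def incL1 : Morphism K0 L1 where
  fV := fun _ => 0
  fE := PEmpty.elim
  src := fun e => e.elim
  tgt := fun e => e.elim
  edgeLabel := fun e => e.elim
  nodeLabel := fun _ _ h => nomatch h
  rootedness := fun _ _ h => nomatch h

/-- rule `r1`: prune a rooted `□`-leaf with unrooted `△`-parent, root moves to the
parent which becomes `□`-labelled -/
def r1 : Rule NodeLab Unit where
  L := L1
  K := K0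
  R := R0
  incL := incL1
  incR := incR0
  injL := ⟨Function.injective_of_subsingleton _, Function.injective_of_subsingleton _⟩
  injR := ⟨Function.injective_of_subsingleton _, Function.injective_of_subsingleton _⟩

/-- `L` of rule `r2`: `v1 --□--> v2`, both `□`-labelled, `v1` rooted, `v2` unrooted. -/
abbrev L2 : RGraph NodeLab Unit where
  V := Fin 2
  E := Unit
  finV := inferInstance
  finE := inferInstance
  s := fun _ => 0
  t := fun _ => 1
  l := fun _ => some .square
  m := fun _ => ()
  p := ![some true, some false]

/-- `K` of rule `r2`: nodes `v1, v2`, unlabelled, rootedness undefined, no edges. -/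
abbrev K2 : RGraph NodeLab Unit where
  V := Fin 2
  E := PEmpty
  finV := inferInstance
  finE := inferInstance
  s := PEmpty.elim
  t := PEmpty.elim
  l := fun _ => none
  m := PEmpty.elim
  p := fun _ => none

/-- `R` of rule `r2`: `v1 --□--> v2`, `v1` labelled `△` and unrooted, `v2` labelled `□`
and rooted. -/
abbrev R2 : RGraph NodeLab Unit where
  V := Fin 2
  E := Unit
  finV := inferInstance
  finE := inferInstance
  s := fun _ => 0
  t := fun _ => 1
  l := ![some .tri, some .square]
  m := fun _ => ()
  p := ![some false, some true]

def incL2 : Morphism K2 L2 where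
  fV := id
  fE := PEmpty.elim
  src := fun e => e.elim
  tgt := fun e => e.elim
  edgeLabel := fun e => e.elim
  nodeLabel := fun _ _ h => nomatch h
  rootedness := fun _ _ h => nomatch h

def incR2 : Morphism K2 R2 where
  fV := id
  fE := PEmpty.elim
  src := fun e => e.elim
  tgt := fun e => e.elim
  edgeLabel := fun e => e.elim
  nodeLabel := fun _ _ h => nomatch h
  rootedness := fun _ _ h => nomatch h

/-- rule `r2`: push the root one step down an edge, marking the old position `△` -/
def r2 : Rule NodeLab Unit where
  L := L2
  K := K2
  R := R2
  incL := incL2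
  incR := incR2
  injL := ⟨Function.injective_id, Function.injective_of_subsingleton _⟩
  injR := ⟨Function.injective_id, Function.injective_of_subsingleton _⟩

/-- the rule set of the tree-recognition system -/
def TreeRules : Set (Rule NodeLab Unit) := {r0, r1, r2}

/-! ## Trees -/

/-- `IsUndirWalk G v l w`: `l` is an undirected walk from `v` to `w` in `G`;
each step is an edge together with a boolean telling in which direction it is
traversed. -/
def IsUndirWalk {LV LE : Type} (G : RGraph LV LE) : G.V → List (G.E × Bool) → G.V → Prop
  | v, [], w => v = w
  | v, (e, true) :: rest, w => G.s e = v ∧ IsUndirWalk G (G.t e) rest w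
  | v, (e, false) :: rest, w => G.t e = v ∧ IsUndirWalk G (G.s e) rest w

/-- connectedness via undirected walks -/
def IsConnectedGraph {LV LE : Type} (G : RGraph LV LE) : Prop :=
  ∀ v w : G.V, ∃ l, IsUndirWalk G v l w

/-- an undirected cycle: a non-empty closed undirected walk without repeated edges -/
def HasUndirCycle {LV LE : Type} (G : RGraph LV LE) : Prop :=
  ∃ (v : G.V) (l : List (G.E × Bool)), l ≠ [] ∧ IsUndirWalk G v l v ∧ (l.map Prod.fst).Nodup

/-- a tree: non-empty, connected, no undirected cycles, and every node has at
most one incoming edge -/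
def IsTree {LV LE : Type} (G : RGraph LV LE) : Prop :=
  Nonempty G.V ∧ IsConnectedGraph G ∧ ¬ HasUndirCycle G ∧
    ∀ v : G.V, Nat.card {e : G.E // G.t e = v} ≤ 1

/-- an input graph: a TLRG with exactly one root node, all nodes labelled `□`
(all edges are `□`-labelled since `Unit` is the edge alphabet) -/
def IsInputGraph (G : RGraph NodeLab Unit) : Prop :=
  G.IsTLRG ∧ (∀ v, G.l v = some .square) ∧ G.rootCount = 1

/-- no rule of `Rs` is applicable to `H` -/
def InNormalForm {LV LE : Type} (Rs : Set (Rule LV LE)) (H : RGraph LV LE) : Prop :=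
  ¬ ∃ r ∈ Rs, ∃ g : Morphism r.L H, r.Applicable H g

/-! Every rule of the tree-recognition system moves exactly one root: `r0` and `r1` delete a
rooted leaf and root its parent, `r2` unroots a node and roots one of its children.
Every other node is untouched and no node is created, so the set of roots after a step
is obtained from the one before by exchanging one root for one non-root, and the number
of roots is invariant under `⇒*`. -/

namespace RGraph

variable {LV LE : Type}

def rootSet (G : RGraph LV LE) : Set G.V := {v | G.p v = some true}

theorem rootCount_eq_ncard_rootSet (G : RGraph LV LE) : G.rootCount = G.rootSet.ncard := rfl

theorem nonempty_of_rootCount_ne_zero {G : RGraph LV LE} (h : G.rootCount ≠ 0) :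
    Nonempty G.V :=
  let ⟨v⟩ := (Nat.card_ne_zero.mp h).1
  ⟨v.1⟩

end RGraph

theorem Iso.rootCount_eq {LV LE : Type} {G H : RGraph LV LE} (i : Iso G H) :
    G.rootCount = H.rootCount :=
  Nat.card_congr
    ⟨fun v => ⟨i.toMor.fV v.1, i.toMor.rootedness _ _ v.2⟩,
     fun v => ⟨i.invMor.fV v.1, i.invMor.rootedness _ _ v.2⟩,
     fun _ => Subtype.ext (i.leftV _), fun _ => Subtype.ext (i.rightV _)⟩

namespace Rule

variable {LV LE : Type} (r : Rule LV LE) {G : RGraph LV LE} {g : Morphism r.L G}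

def keptRoots (h : r.Applicable G g) : Set G.V :=
  {x | ∃ hx : x ∉ r.DelV G g, (r.result G g h).p (Sum.inl ⟨x, hx⟩) = some true}

variable {r}

theorem result_p_inl_of_relabel (h : r.Applicable G g) {x : G.V} (hx : x ∉ r.DelV G g)
    {k : r.K.V} (hk : r.K.p k = none) (hkx : g.fV (r.incL.fV k) = x) :
    (r.result G g h).p (Sum.inl ⟨x, hx⟩) = r.R.p (r.incR.fV k) := by
  have hex : ∃ k : r.K.V, r.K.p k = none ∧ g.fV (r.incL.fV k) = x := ⟨k, hk, hkx⟩
  have hchoose : hex.choose = k := r.injL.1 (h.1.1 (hex.choose_spec.2.trans hkx.symm))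
  dsimp only [result]
  rw [dif_pos hex, hchoose]

theorem result_p_inl_of_untouched (h : r.Applicable G g) {x : G.V} (hx : x ∉ r.DelV G g)
    (hu : ∀ k : r.K.V, r.K.p k = none → g.fV (r.incL.fV k) ≠ x) :
    (r.result G g h).p (Sum.inl ⟨x, hx⟩) = G.p x := by
  dsimp only [result]
  rw [dif_neg fun ⟨k, hk, hkx⟩ => hu k hk hkx]

theorem mem_keptRoots_of_relabel (h : r.Applicable G g) {x : G.V} {k : r.K.V}
    (hk : r.K.p k = none) (hkx : g.fV (r.incL.fV k) = x) :
    x ∈ r.keptRoots h ↔ r.R.p (r.incR.fV k) = some true := by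
  have hx : x ∉ r.DelV G g := hkx ▸ r.kept_incL G h.1 k
  simp only [keptRoots, Set.mem_ofPred_eq, exists_prop_of_true hx,
    result_p_inl_of_relabel h hx hk hkx]

theorem mem_keptRoots_of_untouched (h : r.Applicable G g) {x : G.V} (hx : x ∉ r.DelV G g)
    (hu : ∀ k : r.K.V, r.K.p k = none → g.fV (r.incL.fV k) ≠ x) :
    x ∈ r.keptRoots h ↔ x ∈ G.rootSet := by
  simp only [keptRoots, Set.mem_ofPred_eq, exists_prop_of_true hx,
    result_p_inl_of_untouched h hx hu, RGraph.rootSet]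

theorem notMem_keptRoots_of_mem_delV (h : r.Applicable G g) {x : G.V}
    (hx : x ∈ r.DelV G g) : x ∉ r.keptRoots h :=
  fun ⟨hx', _⟩ => hx' hx

/-- Surjectivity of `incR` on nodes says that `R ∖ K` has no nodes, so every node of the
result comes from `G`. -/
theorem rootCount_result_eq_ncard_keptRoots (h : r.Applicable G g)
    (hR : Function.Surjective r.incR.fV) :
    (r.result G g h).rootCount = (r.keptRoots h).ncard := by
  have hnew : ∀ v : {v : r.R.V // ∀ k, r.incR.fV k ≠ v}, False := fun v =>
    v.2 _ (hR v.1).choose_spec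
  refine Nat.card_congr
    { toFun := fun w => match w with
        | ⟨Sum.inl x, hp⟩ => ⟨x.1, x.2, hp⟩
        | ⟨Sum.inr v, _⟩ => (hnew v).elim
      invFun := fun x => ⟨Sum.inl ⟨x.1, x.2.1⟩, x.2.2⟩
      left_inv := ?_
      right_inv := fun _ => rfl }
  rintro ⟨x | v, hp⟩
  · rfl
  · exact (hnew v).elim

theorem rootCount_result_eq_of_keptRoots_eq_insert_diff (h : r.Applicable G g)
    (hR : Function.Surjective r.incR.fV) {a b : G.V} (ha : a ∈ G.rootSet)
    (hb : b ∉ G.rootSet) (hkept : r.keptRoots h = insert b (G.rootSet \ {a})) :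
    (r.result G g h).rootCount = G.rootCount := by
  rw [rootCount_result_eq_ncard_keptRoots h hR, hkept, Set.ncard_exchange hb ha,
    RGraph.rootCount_eq_ncard_rootSet]

end Rule

theorem GTDerivStar.rootCount_eq {LV LE : Type} {Rs : Set (Rule LV LE)}
    (hRs : ∀ r ∈ Rs, ∀ (G : RGraph LV LE) (g : Morphism r.L G) (h : r.Applicable G g),
      (r.result G g h).rootCount = G.rootCount)
    {G H : RGraph LV LE} (hd : GTDerivStar Rs G H) : H.rootCount = G.rootCount := by
  rcases hd with hsteps | ⟨⟨i⟩⟩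
  · induction hsteps with
    | refl => rfl
    | tail _ hstep ih =>
      obtain ⟨r, hr, g, h, ⟨i⟩⟩ := hstep
      rw [← i.rootCount_eq, hRs r hr _ g h, ih]
  · exact i.rootCount_eq.symm

theorem rootCount_result_r0_r1 {r : Rule NodeLab Unit} (hr : r = r0 ∨ r = r1)
    {G : RGraph NodeLab Unit} {g : Morphism r.L G} (h : r.Applicable G g) :
    (r.result G g h).rootCount = G.rootCount := by
  rcases hr with rfl | rfl <;>
  · have hleaf : g.fV (1 : Fin 2) ∈ G.rootSet := g.rootedness (1 : Fin 2) true rfl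
    have hparent : g.fV (0 : Fin 2) ∉ G.rootSet := by
      simp [RGraph.rootSet, g.rootedness (0 : Fin 2) false rfl]
    have hne : g.fV (0 : Fin 2) ≠ g.fV (1 : Fin 2) := fun he => Fin.zero_ne_one (h.1.1 he)
    have hdel : Rule.DelV _ G g = {g.fV (1 : Fin 2)} := by
      ext x
      simp [Rule.DelV, Fin.exists_fin_two, r0, r1, incL0, incL1, eq_comm]
    refine Rule.rootCount_result_eq_of_keptRoots_eq_insert_diff h Function.surjective_id
      hleaf hparent ?_
    ext x
    by_cases h0 : x = g.fV (0 : Fin 2)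
    · subst h0
      simp only [Set.mem_insert_iff, true_or, iff_true]
      exact (Rule.mem_keptRoots_of_relabel h (k := ()) rfl rfl).2 rfl
    by_cases h1 : x = g.fV (1 : Fin 2)
    · subst h1
      simpa [hne.symm] using
        Rule.notMem_keptRoots_of_mem_delV h (hdel ▸ Set.mem_singleton _)
    rw [Rule.mem_keptRoots_of_untouched h (by simp [hdel, h1]) (fun _ _ hx => h0 hx.symm)]
    simp [h0, h1]

theorem rootCount_result_r2 {G : RGraph NodeLab Unit} {g : Morphism r2.L G}
    (h : r2.Applicable G g) : (r2.result G g h).rootCount = G.rootCount := by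
  have hroot : g.fV (0 : Fin 2) ∈ G.rootSet := g.rootedness (0 : Fin 2) true rfl
  have hchild : g.fV (1 : Fin 2) ∉ G.rootSet := by
    simp [RGraph.rootSet, g.rootedness (1 : Fin 2) false rfl]
  have hne : g.fV (0 : Fin 2) ≠ g.fV (1 : Fin 2) := fun he => Fin.zero_ne_one (h.1.1 he)
  have hdel : r2.DelV G g = ∅ := by
    ext x
    simpa [Rule.DelV] using fun v hv => (hv v rfl).elim
  refine Rule.rootCount_result_eq_of_keptRoots_eq_insert_diff h Function.surjective_id hroot
    hchild ?_
  ext x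
  by_cases h0 : x = g.fV (0 : Fin 2)
  · subst h0
    refine (Rule.mem_keptRoots_of_relabel h (k := (0 : Fin 2)) rfl rfl).trans ?_
    simp [hne, r2, incR2]
  by_cases h1 : x = g.fV (1 : Fin 2)
  · subst h1
    refine (Rule.mem_keptRoots_of_relabel h (k := (1 : Fin 2)) rfl rfl).trans ?_
    simp [r2, incR2]
  rw [Rule.mem_keptRoots_of_untouched h (by simp [hdel])]
  · simp [h0, h1]
  · change ∀ k : Fin 2, _ → g.fV k ≠ x
    simp only [Fin.forall_fin_two]
    exact ⟨fun _ hk => h0 hk.symm, fun _ hk => h1 hk.symm⟩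

theorem rootCount_result_of_mem_treeRules {r : Rule NodeLab Unit} (hr : r ∈ TreeRules)
    {G : RGraph NodeLab Unit} {g : Morphism r.L G} (h : r.Applicable G g) :
    (r.result G g h).rootCount = G.rootCount := by
  rcases hr with rfl | rfl | rfl
  · exact rootCount_result_r0_r1 (Or.inl rfl) h
  · exact rootCount_result_r0_r1 (Or.inr rfl) h
  · exact rootCount_result_r2 h

/-- If `G` is an input graph and `G ⇒*_𝓡 H`, then `H` has exactly one root
node; in particular `H` is non-empty, so the empty graph is not derivable. -/
theorem one_root_nonempty (G H : RGraph NodeLab Unit)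
    (hG : IsInputGraph G) (hd : GTDerivStar TreeRules G H) :
    H.rootCount = 1 ∧ Nonempty H.V := by
  have hroot : H.rootCount = 1 :=
    (hd.rootCount_eq fun _ hr _ _ h => rootCount_result_of_mem_treeRules hr h).trans hG.2.2
  exact ⟨hroot, RGraph.nonempty_of_rootCount_ne_zero (hroot ▸ one_ne_zero)⟩
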